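/- arXiv:2110.14770 — 6 statements merged into one kernel-verified Lean document; each statement's English description precedes it below -/
import Mathlib

section
/- Let S and A be finite sets, T : S × A → Δ(S) a transition kernel, and π₁, π₂ : S → Δ(A) two policies. For any other transition kernel T̄ : S × A → Δ(S) and any distribution d on S, the quantity Err_d(π₁,π₂,T) := (1/2) Σ_{s'} |Σ_{s,a} d(s)(π₁(a|s) − π₂(a|s)) T(s'|s,a)| satisfies Err_d(π₁,π₂,T) ≤ |A| · E_{s∼d, a∼Unif(A)}[D_TV(T(s,a), T̄(s,a))] + Err_d(π₁,π₂,T̄). -/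
open Finset

/-- Lemma 2: the policy-weighted transition error under the true kernel `T` is bounded by
`|A|` times the expected TV-model error (under uniform actions) plus the error under `T̄`. -/
theorem stmt3 {S A : Type*} [Fintype S] [Fintype A]
    (T Tbar : S → A → S → ℝ) (π₁ π₂ : S → A → ℝ) (d : S → ℝ)
    (hT : ∀ s a, (∀ s', 0 ≤ T s a s') ∧ ∑ s', T s a s' = 1)
    (hTbar : ∀ s a, (∀ s', 0 ≤ Tbar s a s') ∧ ∑ s', Tbar s a s' = 1)
    (hπ₁ : ∀ s, (∀ a, 0 ≤ π₁ s a) ∧ ∑ a, π₁ s a = 1)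
    (hπ₂ : ∀ s, (∀ a, 0 ≤ π₂ s a) ∧ ∑ a, π₂ s a = 1)
    (hd : (∀ s, 0 ≤ d s) ∧ ∑ s, d s = 1) :
    (1/2) * ∑ s', |∑ s, ∑ a, d s * (π₁ s a - π₂ s a) * T s a s'| ≤
      (Fintype.card A : ℝ) *
        (∑ s, ∑ a, d s * ((Fintype.card A : ℝ))⁻¹ *
          ((1/2) * ∑ s', |T s a s' - Tbar s a s'|)) +
      (1/2) * ∑ s', |∑ s, ∑ a, d s * (π₁ s a - π₂ s a) * Tbar s a s'| := by
  obtain ⟨hd0, hd1⟩ := hd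
  have hS : Nonempty S := by
    rcases isEmpty_or_nonempty S with h | h
    · simp at hd1
    · exact h
  have hA : (0 : ℝ) < (Fintype.card A : ℝ) := by
    rcases isEmpty_or_nonempty A with h | h
    · have := (hπ₁ (Classical.choice hS)).2
      simp at this
    · exact_mod_cast Fintype.card_pos
  -- simplify the first RHS term
  have h1 : (Fintype.card A : ℝ) *
        (∑ s, ∑ a, d s * ((Fintype.card A : ℝ))⁻¹ *
          ((1/2) * ∑ s', |T s a s' - Tbar s a s'|)) =
      ∑ s, ∑ a, d s * ((1/2) * ∑ s', |T s a s' - Tbar s a s'|) := by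
    rw [Finset.mul_sum]
    refine Finset.sum_congr rfl fun s _ => ?_
    rw [Finset.mul_sum]
    refine Finset.sum_congr rfl fun a _ => ?_
    field_simp
  rw [h1]
  -- pointwise bound on |π₁ - π₂|
  have hπbd : ∀ s a, |π₁ s a - π₂ s a| ≤ 1 := by
    intro s a
    have h11 : π₁ s a ≤ 1 := by
      have := Finset.single_le_sum (f := fun a => π₁ s a)
        (fun a _ => (hπ₁ s).1 a) (Finset.mem_univ a)
      linarith [(hπ₁ s).2]
    have h21 : π₂ s a ≤ 1 := by
      have := Finset.single_le_sum (f := fun a => π₂ s a)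
        (fun a _ => (hπ₂ s).1 a) (Finset.mem_univ a)
      linarith [(hπ₂ s).2]
    rw [abs_sub_le_iff]
    constructor <;> linarith [(hπ₁ s).1 a, (hπ₂ s).1 a]
  -- key pointwise inequality
  have key : ∀ s', |∑ s, ∑ a, d s * (π₁ s a - π₂ s a) * T s a s'|
      ≤ (∑ s, ∑ a, d s * |T s a s' - Tbar s a s'|) +
        |∑ s, ∑ a, d s * (π₁ s a - π₂ s a) * Tbar s a s'| := by
    intro s'
    have h2 : ∑ s, ∑ a, d s * (π₁ s a - π₂ s a) * (T s a s' - Tbar s a s') =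
        (∑ s, ∑ a, d s * (π₁ s a - π₂ s a) * T s a s') -
        (∑ s, ∑ a, d s * (π₁ s a - π₂ s a) * Tbar s a s') := by
      rw [← Finset.sum_sub_distrib]
      refine Finset.sum_congr rfl fun s _ => ?_
      rw [← Finset.sum_sub_distrib]
      refine Finset.sum_congr rfl fun a _ => ?_
      ring
    have h3 : |∑ s, ∑ a, d s * (π₁ s a - π₂ s a) * (T s a s' - Tbar s a s')|
        ≤ ∑ s, ∑ a, d s * |T s a s' - Tbar s a s'| := by
      calc |∑ s, ∑ a, d s * (π₁ s a - π₂ s a) * (T s a s' - Tbar s a s')|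
          ≤ ∑ s, |∑ a, d s * (π₁ s a - π₂ s a) * (T s a s' - Tbar s a s')| :=
            Finset.abs_sum_le_sum_abs _ _
        _ ≤ ∑ s, ∑ a, |d s * (π₁ s a - π₂ s a) * (T s a s' - Tbar s a s')| :=
            Finset.sum_le_sum fun s _ => Finset.abs_sum_le_sum_abs _ _
        _ ≤ ∑ s, ∑ a, d s * |T s a s' - Tbar s a s'| := by
            refine Finset.sum_le_sum fun s _ => Finset.sum_le_sum fun a _ => ?_
            rw [abs_mul, abs_mul, abs_of_nonneg (hd0 s)]
            have hTn : 0 ≤ |T s a s' - Tbar s a s'| := abs_nonneg _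
            have h4 : d s * |π₁ s a - π₂ s a| ≤ d s :=
              mul_le_of_le_one_right (hd0 s) (hπbd s a)
            exact mul_le_mul_of_nonneg_right h4 hTn
    have := abs_sub_abs_le_abs_sub (∑ s, ∑ a, d s * (π₁ s a - π₂ s a) * T s a s')
      (∑ s, ∑ a, d s * (π₁ s a - π₂ s a) * Tbar s a s')
    rw [← h2] at this
    linarith
  calc (1/2) * ∑ s', |∑ s, ∑ a, d s * (π₁ s a - π₂ s a) * T s a s'|
      ≤ (1/2) * ∑ s', ((∑ s, ∑ a, d s * |T s a s' - Tbar s a s'|) +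
          |∑ s, ∑ a, d s * (π₁ s a - π₂ s a) * Tbar s a s'|) := by
        have := Finset.sum_le_sum fun s' (_ : s' ∈ Finset.univ) => key s'
        linarith
    _ = (1/2) * ∑ s', (∑ s, ∑ a, d s * |T s a s' - Tbar s a s'|) +
        (1/2) * ∑ s', |∑ s, ∑ a, d s * (π₁ s a - π₂ s a) * Tbar s a s'| := by
        rw [Finset.sum_add_distrib]; ring
    _ = (∑ s, ∑ a, d s * ((1/2) * ∑ s', |T s a s' - Tbar s a s'|)) +
        (1/2) * ∑ s', |∑ s, ∑ a, d s * (π₁ s a - π₂ s a) * Tbar s a s'| := by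
        congr 1
        rw [Finset.sum_comm]
        rw [Finset.mul_sum]
        refine Finset.sum_congr rfl fun s _ => ?_
        rw [Finset.sum_comm, Finset.mul_sum]
        refine Finset.sum_congr rfl fun a _ => ?_
        rw [← Finset.mul_sum]
        ring
end

section
/- Let S, A, Z be finite sets, φ : S × A → Z, and suppose T̄(s,a) = T_Z(s, φ(s,a)) for some latent transition kernel T_Z : S × Z → Δ(S). Then for any two policies π₁, π₂ : S → Δ(A) and distribution d ∈ Δ(S), Err_d(π₁,π₂,T̄) ≤ E_{s∼d}[D_TV(π₁,Z(s), π₂,Z(s))], where π_{k,Z}(z|s) := Σ_{a : φ(s,a)=z} π_k(a|s) is the marginalization of π_k onto Z. -/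
open Finset

/-- Lemma 3: if the model factors as `T̄(s,a) = T_Z(s, φ(s,a))`, then the policy-weighted
transition error is bounded by the expected TV distance of the marginalized latent policies. -/
theorem stmt4 {S A Z : Type*} [Fintype S] [Fintype A] [Fintype Z] [DecidableEq Z]
    (TZ : S → Z → S → ℝ) (φ : S → A → Z) (π₁ π₂ : S → A → ℝ) (d : S → ℝ)
    (hTZ : ∀ s z, (∀ s', 0 ≤ TZ s z s') ∧ ∑ s', TZ s z s' = 1)
    (hπ₁ : ∀ s, (∀ a, 0 ≤ π₁ s a) ∧ ∑ a, π₁ s a = 1)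
    (hπ₂ : ∀ s, (∀ a, 0 ≤ π₂ s a) ∧ ∑ a, π₂ s a = 1)
    (hd : (∀ s, 0 ≤ d s) ∧ ∑ s, d s = 1) :
    (1/2) * ∑ s', |∑ s, ∑ a, d s * (π₁ s a - π₂ s a) * TZ s (φ s a) s'| ≤
      ∑ s, d s * ((1/2) * ∑ z,
        |(∑ a ∈ univ.filter (fun a => φ s a = z), π₁ s a) -
          (∑ a ∈ univ.filter (fun a => φ s a = z), π₂ s a)|) := by
  classical
  set Δ := fun s z => (∑ a ∈ univ.filter (fun a => φ s a = z), π₁ s a)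
      - (∑ a ∈ univ.filter (fun a => φ s a = z), π₂ s a) with hΔ
  have key : ∀ s s', ∑ a, d s * (π₁ s a - π₂ s a) * TZ s (φ s a) s'
      = ∑ z, d s * Δ s z * TZ s z s' := by
    intro s s'
    rw [← Finset.sum_fiberwise univ (fun a => φ s a)
         (fun a => d s * (π₁ s a - π₂ s a) * TZ s (φ s a) s')]
    refine Finset.sum_congr rfl fun z _ => ?_
    have h1 : ∀ a ∈ univ.filter (fun a => φ s a = z),
        d s * (π₁ s a - π₂ s a) * TZ s (φ s a) s'
        = d s * (π₁ s a - π₂ s a) * TZ s z s' := by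
      intro a ha
      rw [(Finset.mem_filter.mp ha).2]
    rw [Finset.sum_congr rfl h1, ← Finset.sum_mul, ← Finset.mul_sum,
        Finset.sum_sub_distrib]
  calc (1/2) * ∑ s', |∑ s, ∑ a, d s * (π₁ s a - π₂ s a) * TZ s (φ s a) s'|
      = (1/2) * ∑ s', |∑ s, ∑ z, d s * Δ s z * TZ s z s'| := by
        simp_rw [key]
    _ ≤ (1/2) * ∑ s', ∑ s, ∑ z, d s * |Δ s z| * TZ s z s' := by
        gcongr with s' _
        calc |∑ s, ∑ z, d s * Δ s z * TZ s z s'|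
            ≤ ∑ s, |∑ z, d s * Δ s z * TZ s z s'| := Finset.abs_sum_le_sum_abs _ _
          _ ≤ ∑ s, ∑ z, |d s * Δ s z * TZ s z s'| := by
              gcongr with s _
              exact Finset.abs_sum_le_sum_abs _ _
          _ = ∑ s, ∑ z, d s * |Δ s z| * TZ s z s' := by
              refine Finset.sum_congr rfl fun s _ => Finset.sum_congr rfl fun z _ => ?_
              rw [abs_mul, abs_mul, abs_of_nonneg (hd.1 s),
                  abs_of_nonneg ((hTZ s z).1 s')]
    _ = ∑ s, d s * ((1/2) * ∑ z, |Δ s z|) := by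
        have h2 : ∑ s', ∑ s, ∑ z, d s * |Δ s z| * TZ s z s'
            = ∑ s, ∑ z, d s * |Δ s z| := by
          rw [Finset.sum_comm]
          refine Finset.sum_congr rfl fun s _ => ?_
          rw [Finset.sum_comm]
          refine Finset.sum_congr rfl fun z _ => ?_
          rw [← Finset.mul_sum, (hTZ s z).2, mul_one]
        rw [h2, Finset.mul_sum]
        refine Finset.sum_congr rfl fun s _ => ?_
        rw [← Finset.mul_sum]
        ring
end

section
/- Let π_Z : S → Δ(Z), π_α : S × Z → Δ(A), φ : S × A → Z, and let π_{α,Z}(z|s) := Σ_{a : φ(s,a)=z} Σ_{z̃} π_α(a|s,z̃) π_Z(z̃|s) be the marginalization of π_α ∘ π_Z onto Z. Let π_{α*} be the optimal action decoder for some d ∈ Δ(S×A) and φ (with positive denominators). Then for any s, D_TV(π_Z(s), π_{α,Z}(s)) ≤ max_{z∈Z} D_TV(π_{α*}(s,z), π_α(s,z)). -/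
open Finset

/-- Lemma 5: the TV distance between a latent policy and the marginalization of the
decoded policy is bounded by the worst-case decoder error. -/
theorem stmt6 {S A Z : Type*} [Fintype A] [Fintype Z] [Nonempty Z] [DecidableEq Z]
    (d : S → A → ℝ) (hd : ∀ s a, 0 ≤ d s a)
    (φ : S → A → Z) (πZ : S → Z → ℝ) (πα : S → Z → A → ℝ)
    (s : S)
    (hπZ : (∀ z, 0 ≤ πZ s z) ∧ ∑ z, πZ s z = 1)
    (hπα : ∀ z, (∀ a, 0 ≤ πα s z a) ∧ ∑ a, πα s z a = 1)
    (hpos : ∀ z, 0 < ∑ a' ∈ univ.filter (fun a' => φ s a' = z), d s a') :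
    (1/2) * ∑ z,
        |πZ s z - ∑ a ∈ univ.filter (fun a => φ s a = z), ∑ z', πα s z' a * πZ s z'|
      ≤ ⨆ z : Z, (1/2) * ∑ a,
          |d s a * (if z = φ s a then (1:ℝ) else 0) /
              (∑ a' ∈ univ.filter (fun a' => φ s a' = z), d s a') - πα s z a| := by
  obtain ⟨hZ0, hZ1⟩ := hπZ
  set den : Z → ℝ := fun z => ∑ a' ∈ univ.filter (fun a' => φ s a' = z), d s a' with hden
  set g : Z → A → ℝ := fun z a => d s a * (if z = φ s a then (1:ℝ) else 0) / den z with hg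
  set F : Z → ℝ := fun z => (1/2) * ∑ a, |g z a - πα s z a| with hF
  have hFnn : ∀ z, 0 ≤ F z := by
    intro z
    have : (0:ℝ) ≤ ∑ a, |g z a - πα s z a| :=
      Finset.sum_nonneg fun a _ => abs_nonneg _
    simp only [hF]
    linarith
  have hbdd : BddAbove (Set.range F) := Set.Finite.bddAbove (Set.finite_range F)
  have hFle : ∀ z, F z ≤ ⨆ z, F z := fun z => le_ciSup hbdd z
  have hsupnn : 0 ≤ ⨆ z, F z :=
    le_trans (hFnn (Classical.arbitrary Z)) (hFle _)
  have hkey : ∀ z, πZ s z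
      = ∑ a ∈ univ.filter (fun a => φ s a = z), ∑ z', g z' a * πZ s z' := by
    intro z
    have h1 : ∀ a ∈ univ.filter (fun a => φ s a = z),
        ∑ z', g z' a * πZ s z' = d s a * πZ s z / den z := by
      intro a ha
      simp only [mem_filter, mem_univ, true_and] at ha
      rw [Finset.sum_eq_single (φ s a)]
      · simp only [hg, ha]
        simp [div_mul_eq_mul_div]
      · intro b _ hb; simp [hg, hb]
      · simp
    rw [Finset.sum_congr rfl h1, ← Finset.sum_div, ← Finset.sum_mul]
    rw [mul_comm, mul_div_assoc, div_self (hpos z).ne', mul_one]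
  have step1 : ∀ z,
      |πZ s z - ∑ a ∈ univ.filter (fun a => φ s a = z), ∑ z', πα s z' a * πZ s z'|
      ≤ ∑ a ∈ univ.filter (fun a => φ s a = z), ∑ z', |g z' a - πα s z' a| * πZ s z' := by
    intro z
    rw [hkey z, ← Finset.sum_sub_distrib]
    refine (Finset.abs_sum_le_sum_abs _ _).trans (Finset.sum_le_sum ?_)
    intro a _
    rw [← Finset.sum_sub_distrib]
    refine (Finset.abs_sum_le_sum_abs _ _).trans (Finset.sum_le_sum ?_)
    intro z' _
    rw [← sub_mul, abs_mul, abs_of_nonneg (hZ0 z')]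
  have step2 : (1/2) * ∑ z,
      |πZ s z - ∑ a ∈ univ.filter (fun a => φ s a = z), ∑ z', πα s z' a * πZ s z'|
      ≤ (1/2) * ∑ a, ∑ z', |g z' a - πα s z' a| * πZ s z' := by
    have := Finset.sum_le_sum (fun z (_ : z ∈ (univ : Finset Z)) => step1 z)
    have hfib : ∑ z, ∑ a ∈ univ.filter (fun a => φ s a = z),
        ∑ z', |g z' a - πα s z' a| * πZ s z'
        = ∑ a, ∑ z', |g z' a - πα s z' a| * πZ s z' := by
      exact Finset.sum_fiberwise _ _ _
    linarith [this, hfib.ge, hfib.le]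
  refine step2.trans ?_
  have hswap : (1/2) * ∑ a, ∑ z', |g z' a - πα s z' a| * πZ s z'
      = ∑ z', πZ s z' * F z' := by
    rw [Finset.sum_comm, Finset.mul_sum]
    refine Finset.sum_congr rfl fun z' _ => ?_
    simp only [hF]
    rw [← Finset.sum_mul]
    ring
  rw [hswap]
  calc ∑ z', πZ s z' * F z'
      ≤ ∑ z', πZ s z' * (⨆ z, F z) :=
        Finset.sum_le_sum fun z' _ => mul_le_mul_of_nonneg_left (hFle z') (hZ0 z')
    _ = ⨆ z, F z := by rw [← Finset.sum_mul, hZ1, one_mul]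
end

section
/- (Deterministic pointwise version of the conditional TV decomposition) Let x, x̂ ∈ Δ(S × A) with marginals ρ(s)=Σ_a x(s,a), ρ̂(s)=Σ_a x̂(s,a), and conditionals π(a|s)=x(s,a)/ρ(s), π̂(a|s)=x̂(s,a)/ρ̂(s) (defined when denominators positive). Then Σ_s ρ(s) D_TV(π(s), π̂(s)) ≤ D_TV(ρ, ρ̂) + D_TV(x, x̂), where sums are over states with ρ(s)>0 and ρ̂(s)>0. -/
open Finset

lemma key_tv {A : Type*} [Fintype A] (f g : A → ℝ) (hg : ∀ a, 0 ≤ g a)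
    (hρ : 0 < ∑ a, f a) (hρh : 0 < ∑ a, g a) :
    (∑ a, f a) * ((1/2) * ∑ a, |f a / (∑ a', f a') - g a / (∑ a', g a')|)
      ≤ (1/2) * |(∑ a, f a) - (∑ a, g a)| + (1/2) * ∑ a, |f a - g a| := by
  set ρ := ∑ a, f a with hρdef
  set ρh := ∑ a, g a with hρhdef
  have h1 : ∀ a, ρ * |f a / ρ - g a / ρh| = |f a - ρ * (g a / ρh)| := by
    intro a
    rw [← abs_of_pos hρ, ← abs_mul]
    congr 1
    have habs : |ρ| = ρ := abs_of_pos hρ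
    field_simp [habs]
    rw [habs]
  have h2 : ∀ a, |f a - ρ * (g a / ρh)| ≤ |f a - g a| + (g a / ρh) * |ρh - ρ| := by
    intro a
    have heq : f a - ρ * (g a / ρh) = (f a - g a) + (g a / ρh) * (ρh - ρ) := by
      field_simp; ring
    rw [heq]
    calc _ ≤ |f a - g a| + |(g a / ρh) * (ρh - ρ)| := abs_add_le _ _
    _ = |f a - g a| + (g a / ρh) * |ρh - ρ| := by
        rw [abs_mul, abs_of_nonneg (div_nonneg (hg a) hρh.le)]
  have hsum : ∑ a, (g a / ρh) = 1 := by
    rw [← Finset.sum_div]; exact div_self hρh.ne'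
  calc ρ * ((1/2) * ∑ a, |f a / ρ - g a / ρh|)
      = (1/2) * ∑ a, ρ * |f a / ρ - g a / ρh| := by
        rw [← mul_assoc, mul_comm ρ (1/2 : ℝ), mul_assoc, Finset.mul_sum]
    _ = (1/2) * ∑ a, |f a - ρ * (g a / ρh)| := by simp_rw [h1]
    _ ≤ (1/2) * ∑ a, (|f a - g a| + (g a / ρh) * |ρh - ρ|) := by
        exact mul_le_mul_of_nonneg_left (Finset.sum_le_sum fun a _ => h2 a) (by norm_num)
    _ = (1/2) * (∑ a, |f a - g a| + |ρh - ρ|) := by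
        rw [Finset.sum_add_distrib, ← Finset.sum_mul, hsum, one_mul]
    _ = (1/2) * |ρ - ρh| + (1/2) * ∑ a, |f a - g a| := by
        rw [abs_sub_comm]; ring

/-- Deterministic pointwise conditional TV decomposition. -/
theorem stmt9 {S A : Type*} [Fintype S] [Fintype A]
    (x xhat : S → A → ℝ)
    (hx : ∀ s a, 0 ≤ x s a) (hxhat : ∀ s a, 0 ≤ xhat s a)
    (hxsum : ∑ s, ∑ a, x s a = 1) (hxhatsum : ∑ s, ∑ a, xhat s a = 1)
    (hac : ∀ s, 0 < ∑ a, x s a → 0 < ∑ a, xhat s a) :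
    ∑ s ∈ univ.filter (fun s => 0 < ∑ a, x s a),
        (∑ a, x s a) *
          ((1/2) * ∑ a, |x s a / (∑ a', x s a') - xhat s a / (∑ a', xhat s a')|)
      ≤ (1/2) * (∑ s, |(∑ a, x s a) - (∑ a, xhat s a)|) +
        (1/2) * (∑ s, ∑ a, |x s a - xhat s a|) := by
  have hstep : ∑ s ∈ univ.filter (fun s => 0 < ∑ a, x s a),
        (∑ a, x s a) *
          ((1/2) * ∑ a, |x s a / (∑ a', x s a') - xhat s a / (∑ a', xhat s a')|)
      ≤ ∑ s ∈ univ.filter (fun s => 0 < ∑ a, x s a),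
          ((1/2) * |(∑ a, x s a) - (∑ a, xhat s a)| + (1/2) * ∑ a, |x s a - xhat s a|) := by
    apply Finset.sum_le_sum
    intro s hs
    rw [Finset.mem_filter] at hs
    exact key_tv (x s) (xhat s) (hxhat s) hs.2 (hac s hs.2)
  refine hstep.trans ?_
  rw [Finset.sum_add_distrib]
  gcongr ?_ + ?_
  · rw [Finset.mul_sum]
    apply Finset.sum_le_sum_of_subset_of_nonneg (Finset.filter_subset _ _)
    intro s _ _
    positivity
  · rw [Finset.mul_sum]
    apply Finset.sum_le_sum_of_subset_of_nonneg (Finset.filter_subset _ _)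
    intro s _ _
    positivity
end

section
/- Let M be a finite MDP with transition kernel T, initial distribution μ and discount γ ∈ [0,1). For policies π₁, π₂ with discounted state visitation distributions d^{π₁}, d^{π₂} (where d^π(s) = (1−γ)Σₜ γᵗ Pr[sₜ = s | π]), the total variation distance satisfies D_TV(d^{π₂}, d^{π₁}) ≤ (γ/(1−γ)) · Err_{d^{π₁}}(π₁,π₂,T), where Err_d(π₁,π₂,T) = (1/2)Σ_{s'}|E_{s∼d}[Σ_a (π₁(a|s) − π₂(a|s)) T(s'|s,a)]|. -/
open Finset

/-- Lemma 1: visitation-distribution difference bound. The discounted state visitation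
distributions are characterized by the Bellman flow equations. -/
theorem stmt10 {S A : Type*} [Fintype S] [Fintype A]
    (T : S → A → S → ℝ) (μ : S → ℝ) (γ : ℝ) (hγ0 : 0 ≤ γ) (hγ1 : γ < 1)
    (π₁ π₂ : S → A → ℝ) (d₁ d₂ : S → ℝ)
    (hT : ∀ s a, (∀ s', 0 ≤ T s a s') ∧ ∑ s', T s a s' = 1)
    (hμ : (∀ s, 0 ≤ μ s) ∧ ∑ s, μ s = 1)
    (hπ₁ : ∀ s, (∀ a, 0 ≤ π₁ s a) ∧ ∑ a, π₁ s a = 1)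
    (hπ₂ : ∀ s, (∀ a, 0 ≤ π₂ s a) ∧ ∑ a, π₂ s a = 1)
    (hd₁pos : ∀ s, 0 ≤ d₁ s) (hd₂pos : ∀ s, 0 ≤ d₂ s)
    (hd₁ : ∀ s', d₁ s' = (1 - γ) * μ s' + γ * ∑ s, ∑ a, d₁ s * π₁ s a * T s a s')
    (hd₂ : ∀ s', d₂ s' = (1 - γ) * μ s' + γ * ∑ s, ∑ a, d₂ s * π₂ s a * T s a s') :
    (1/2) * ∑ s, |d₂ s - d₁ s| ≤
      γ / (1 - γ) *
        ((1/2) * ∑ s', |∑ s, ∑ a, d₁ s * (π₁ s a - π₂ s a) * T s a s'|) := by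
  have h1γ : (0:ℝ) < 1 - γ := by linarith
  set E : ℝ := ∑ s, |d₂ s - d₁ s| with hE
  set B : ℝ := ∑ s', |∑ s, ∑ a, d₁ s * (π₁ s a - π₂ s a) * T s a s'| with hB
  -- key identity
  have step : ∀ s', d₂ s' - d₁ s' =
      γ * ((∑ s, ∑ a, (d₂ s - d₁ s) * π₂ s a * T s a s')
        - ∑ s, ∑ a, d₁ s * (π₁ s a - π₂ s a) * T s a s') := by
    intro s'
    rw [hd₂ s', hd₁ s']
    have : (∑ s, ∑ a, (d₂ s - d₁ s) * π₂ s a * T s a s')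
        - ∑ s, ∑ a, d₁ s * (π₁ s a - π₂ s a) * T s a s'
        = (∑ s, ∑ a, d₂ s * π₂ s a * T s a s')
          - ∑ s, ∑ a, d₁ s * π₁ s a * T s a s' := by
      rw [← Finset.sum_sub_distrib, ← Finset.sum_sub_distrib]
      refine Finset.sum_congr rfl fun s _ => ?_
      rw [← Finset.sum_sub_distrib, ← Finset.sum_sub_distrib]
      exact Finset.sum_congr rfl fun a _ => by ring
    rw [this]; ring
  have key : E ≤ γ * E + γ * B := by
    have bound : ∀ s', |d₂ s' - d₁ s'| ≤
        γ * ((∑ s, ∑ a, |d₂ s - d₁ s| * π₂ s a * T s a s')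
          + |∑ s, ∑ a, d₁ s * (π₁ s a - π₂ s a) * T s a s'|) := by
      intro s'
      rw [step s', abs_mul, abs_of_nonneg hγ0]
      refine mul_le_mul_of_nonneg_left ?_ hγ0
      refine (abs_sub _ _).trans (add_le_add ?_ le_rfl)
      refine (Finset.abs_sum_le_sum_abs _ _).trans ?_
      refine Finset.sum_le_sum fun s _ => ?_
      refine (Finset.abs_sum_le_sum_abs _ _).trans ?_
      refine Finset.sum_le_sum fun a _ => ?_
      rw [abs_mul, abs_mul,
        abs_of_nonneg ((hπ₂ s).1 a), abs_of_nonneg ((hT s a).1 s')]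
    have sum_bound : E ≤ ∑ s', γ * ((∑ s, ∑ a, |d₂ s - d₁ s| * π₂ s a * T s a s')
          + |∑ s, ∑ a, d₁ s * (π₁ s a - π₂ s a) * T s a s'|) :=
      Finset.sum_le_sum fun s' _ => bound s'
    have collapse : ∑ s' : S, ∑ s, ∑ a, |d₂ s - d₁ s| * π₂ s a * T s a s' = E := by
      rw [Finset.sum_comm]
      refine Finset.sum_congr rfl fun s _ => ?_
      rw [Finset.sum_comm]
      calc ∑ a, ∑ s', |d₂ s - d₁ s| * π₂ s a * T s a s'
          = ∑ a, |d₂ s - d₁ s| * π₂ s a := by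
            refine Finset.sum_congr rfl fun a _ => ?_
            rw [← Finset.mul_sum, (hT s a).2, mul_one]
        _ = |d₂ s - d₁ s| := by rw [← Finset.mul_sum, (hπ₂ s).2, mul_one]
    calc E ≤ ∑ s', γ * ((∑ s, ∑ a, |d₂ s - d₁ s| * π₂ s a * T s a s')
          + |∑ s, ∑ a, d₁ s * (π₁ s a - π₂ s a) * T s a s'|) := sum_bound
      _ = γ * E + γ * B := by
          rw [← Finset.mul_sum, Finset.sum_add_distrib, collapse, mul_add]
  have main : E ≤ γ / (1 - γ) * B := by
    rw [div_mul_eq_mul_div, le_div_iff₀ h1γ]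
    nlinarith
  linarith
end

section
/- Let φ : S × A → Z ⊂ ℝᵈ and suppose there exists w : S → ℝᵈ such that the transition kernel factors linearly: T(s'|s,a) = w(s')ᵀφ(s,a) for all s,s',a. Let θ ∈ ℝ^{d×|S|} and define for each state s the gradient g_s = ∂/∂θ_s E_{s̃∼d, a∼π(s̃)}[‖θ_{s̃} − φ(s̃,a)‖²] = 2d(s)(θ_s − E_{a∼π(s)}[φ(s,a)]). Then Err_d(π, π_θ, T) ≤ (1/4)|S|·‖w‖_∞ · Σ_s ‖g_s‖₁, where π_θ is the deterministic latent policy selecting z = θ_s and Err_d(π,π_θ,T) := (1/2)Σ_{s'} |E_{s∼d}[−E_{a∼π(s)}[T(s'|s,a)] + w(s')ᵀθ_s]|. -/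
open Finset

/-- Linear transition model gradient bound (key step of Theorem 3): the policy-weighted
transition error of a deterministic latent policy `θ` is bounded by
`(1/4)|S| ‖w‖_∞` times the ℓ₁ norm of the gradient of the latent squared loss. -/
theorem stmt13 {S A : Type*} [Fintype S] [Fintype A] [Nonempty S] {dd : ℕ} [NeZero dd]
    (T : S → A → S → ℝ) (φ : S → A → Fin dd → ℝ) (w : S → Fin dd → ℝ)
    (d : S → ℝ) (π : S → A → ℝ) (θ : S → Fin dd → ℝ)
    (hd : (∀ s, 0 ≤ d s) ∧ ∑ s, d s = 1)
    (hπ : ∀ s, (∀ a, 0 ≤ π s a) ∧ ∑ a, π s a = 1)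
    (hT : ∀ s a s', T s a s' = ∑ i, w s' i * φ s a i) :
    (1/2) * ∑ s',
        |∑ s, d s * (-(∑ a, π s a * T s a s') + ∑ i, w s' i * θ s i)|
      ≤ (1/4) * (Fintype.card S : ℝ) * (⨆ p : S × Fin dd, |w p.1 p.2|) *
          ∑ s, ∑ i, |2 * d s * (θ s i - ∑ a, π s a * φ s a i)| := by
  set M := ⨆ p : S × Fin dd, |w p.1 p.2| with hMdef
  have hM : ∀ s i, |w s i| ≤ M := fun s i =>
    le_ciSup (f := fun p : S × Fin dd => |w p.1 p.2|) (Set.Finite.bddAbove (Set.finite_range _)) (⟨s, i⟩ : S × Fin dd)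
  set K := ∑ s, ∑ i, d s * |θ s i - ∑ a, π s a * φ s a i| with hKdef
  have key : ∀ s', |∑ s, d s * (-(∑ a, π s a * T s a s') + ∑ i, w s' i * θ s i)| ≤ M * K := by
    intro s'
    have hrw : ∀ s, d s * (-(∑ a, π s a * T s a s') + ∑ i, w s' i * θ s i)
        = ∑ i, d s * (w s' i * (θ s i - ∑ a, π s a * φ s a i)) := by
      intro s
      have h1 : ∑ a, π s a * T s a s' = ∑ i, w s' i * ∑ a, π s a * φ s a i := by
        simp_rw [hT, Finset.mul_sum]
        rw [Finset.sum_comm]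
        exact Finset.sum_congr rfl fun i _ => Finset.sum_congr rfl fun a _ => by ring
      rw [h1, neg_add_eq_sub, ← Finset.sum_sub_distrib, Finset.mul_sum]
      exact Finset.sum_congr rfl fun i _ => by ring
    calc |∑ s, d s * (-(∑ a, π s a * T s a s') + ∑ i, w s' i * θ s i)|
        = |∑ s, ∑ i, d s * (w s' i * (θ s i - ∑ a, π s a * φ s a i))| := by
          congr 1; exact Finset.sum_congr rfl fun s _ => hrw s
      _ ≤ ∑ s, ∑ i, |d s * (w s' i * (θ s i - ∑ a, π s a * φ s a i))| := by
          refine (Finset.abs_sum_le_sum_abs _ _).trans ?_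
          exact Finset.sum_le_sum fun s _ => Finset.abs_sum_le_sum_abs _ _
      _ ≤ ∑ s, ∑ i, M * (d s * |θ s i - ∑ a, π s a * φ s a i|) := by
          refine Finset.sum_le_sum fun s _ => Finset.sum_le_sum fun i _ => ?_
          rw [abs_mul, abs_mul, abs_of_nonneg (hd.1 s)]
          have h0 : 0 ≤ |θ s i - ∑ a, π s a * φ s a i| := abs_nonneg _
          calc d s * (|w s' i| * |θ s i - ∑ a, π s a * φ s a i|)
              ≤ d s * (M * |θ s i - ∑ a, π s a * φ s a i|) := by
                exact mul_le_mul_of_nonneg_left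
                  (mul_le_mul_of_nonneg_right (hM s' i) h0) (hd.1 s)
            _ = M * (d s * |θ s i - ∑ a, π s a * φ s a i|) := by ring
      _ = M * K := by
          rw [hKdef, Finset.mul_sum]
          exact Finset.sum_congr rfl fun s _ => by rw [Finset.mul_sum]
  have hRHS : ∑ s, ∑ i, |2 * d s * (θ s i - ∑ a, π s a * φ s a i)| = 2 * K := by
    rw [hKdef, Finset.mul_sum]
    refine Finset.sum_congr rfl fun s _ => ?_
    rw [Finset.mul_sum]
    refine Finset.sum_congr rfl fun i _ => ?_
    rw [abs_mul, abs_mul, abs_of_nonneg (hd.1 s)]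
    norm_num; ring
  rw [hRHS]
  have hsum : ∑ s', |∑ s, d s * (-(∑ a, π s a * T s a s') + ∑ i, w s' i * θ s i)|
      ≤ (Fintype.card S : ℝ) * (M * K) := by
    calc ∑ s', |∑ s, d s * (-(∑ a, π s a * T s a s') + ∑ i, w s' i * θ s i)|
        ≤ ∑ _s' : S, M * K := Finset.sum_le_sum fun s' _ => key s'
      _ = (Fintype.card S : ℝ) * (M * K) := by
          rw [Finset.sum_const, nsmul_eq_mul]; simp
  linarith
end
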